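/- Let K ≥ 1, p_k ≥ 1 for each k ≤ K, σ^k : Fin p_k → ℝ positive with pairwise distinct values in each mode, and S : Π_k Fin p_k → ℝ. Define C_i = 1 + Σ_{k=1}^K Σ_{j ≠ i_k} S_{i(k→j)}² / ((σ^k_{i_k})² − (σ^k_j)²) − S_i² Σ_{k=1}^K ( 1/(σ^k_{i_k})² + Σ_{m ≠ i_k} 1/((σ^k_m)² − (σ^k_{i_k})²) ), where i(k→j) replaces the k-th coordinate of i by j. Then Σ_i C_i = Π_k p_k − Σ_i S_i² Σ_{k=1}^K 1/(σ^k_{i_k})². -/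

import Mathlib

/-! Reindexing by `(i, j) ↦ (i(k→j), i k)`, an involution of the pairs with `j ≠ i k`, turns the
first double sum in `C i` into `∑ S_i² / ((σ^k_m)² − (σ^k_{i_k})²)`, which is the off-diagonal part
of the last term; after summing over `i` only `1` and the diagonal terms `S_i² / (σ^k_{i_k})²`
survive. -/

open Finset

theorem Finset.sum_sum_erase_update_comm {ι : Type*} [Fintype ι] [DecidableEq ι]
    {β : ι → Type*} [∀ k, Fintype (β k)] [∀ k, DecidableEq (β k)] {M : Type*}
    [AddCommMonoid M] (k : ι) (f : (∀ k, β k) → β k → M) :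
    ∑ i : ∀ k, β k, ∑ j ∈ univ.erase (i k), f (Function.update i k j) (i k)
      = ∑ i : ∀ k, β k, ∑ j ∈ univ.erase (i k), f i j := by
  rw [sum_sigma', sum_sigma']
  refine sum_nbij' (fun x => ⟨Function.update x.1 k x.2, x.1 k⟩)
    (fun x => ⟨Function.update x.1 k x.2, x.1 k⟩) ?_ ?_ ?_ ?_ ?_ <;>
  · rintro ⟨i, j⟩ h
    simp only [mem_sigma, mem_univ, mem_erase, true_and, and_true] at h
    simp [Ne.symm h]

theorem sum_correction_array_general (K : ℕ) (p : Fin K → ℕ)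
    (σ : (k : Fin K) → Fin (p k) → ℝ)
    (S : ((k : Fin K) → Fin (p k)) → ℝ)
    (C : ((k : Fin K) → Fin (p k)) → ℝ)
    (hC : ∀ i, C i =
      1 + ∑ k, ∑ j ∈ univ.erase (i k),
            S (Function.update i k j) ^ 2 / ((σ k (i k)) ^ 2 - (σ k j) ^ 2)
        - S i ^ 2 * ∑ k, (1 / (σ k (i k)) ^ 2
            + ∑ m ∈ univ.erase (i k), 1 / ((σ k m) ^ 2 - (σ k (i k)) ^ 2))) :
    ∑ i : (k : Fin K) → Fin (p k), C i
      = (∏ k, (p k : ℝ))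
        - ∑ i : (k : Fin K) → Fin (p k), S i ^ 2 * ∑ k, 1 / (σ k (i k)) ^ 2 := by
  have hcancel : ∑ i : (k : Fin K) → Fin (p k), ∑ k, ∑ j ∈ univ.erase (i k),
        S (Function.update i k j) ^ 2 / ((σ k (i k)) ^ 2 - (σ k j) ^ 2)
      = ∑ i : (k : Fin K) → Fin (p k), ∑ k, ∑ m ∈ univ.erase (i k),
        S i ^ 2 / ((σ k m) ^ 2 - (σ k (i k)) ^ 2) := by
    rw [sum_comm]
    conv_rhs => rw [sum_comm]
    refine sum_congr rfl fun k _ => ?_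
    simpa only [Function.update_self] using
      sum_sum_erase_update_comm k fun i m => S i ^ 2 / (σ k m ^ 2 - σ k (i k) ^ 2)
  have hsplit : ∀ i, C i = 1 - S i ^ 2 * ∑ k, 1 / (σ k (i k)) ^ 2
      + (∑ k, ∑ j ∈ univ.erase (i k),
          S (Function.update i k j) ^ 2 / ((σ k (i k)) ^ 2 - (σ k j) ^ 2)
        - ∑ k, ∑ m ∈ univ.erase (i k), S i ^ 2 / ((σ k m) ^ 2 - (σ k (i k)) ^ 2)) := by
    intro i
    simp only [hC, sum_add_distrib, mul_add, mul_sum, mul_one_div]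
    ring
  simp only [hsplit, sum_add_distrib, sum_sub_distrib, hcancel, sub_self, add_zero, sum_const,
    card_univ, Fintype.card_pi, Fintype.card_fin, nsmul_one, Nat.cast_prod]

theorem sum_correction_array (K : ℕ) (hK : 1 ≤ K) (p : Fin K → ℕ)
    (hp : ∀ k, 1 ≤ p k) (σ : (k : Fin K) → Fin (p k) → ℝ)
    (hσpos : ∀ k i, 0 < σ k i)
    (hdist : ∀ k, Function.Injective (σ k))
    (S : ((k : Fin K) → Fin (p k)) → ℝ)
    (C : ((k : Fin K) → Fin (p k)) → ℝ)
    (hC : ∀ i, C i =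
      1 + ∑ k, ∑ j ∈ univ.erase (i k),
            S (Function.update i k j) ^ 2 / ((σ k (i k)) ^ 2 - (σ k j) ^ 2)
        - S i ^ 2 * ∑ k, (1 / (σ k (i k)) ^ 2
            + ∑ m ∈ univ.erase (i k), 1 / ((σ k m) ^ 2 - (σ k (i k)) ^ 2))) :
    ∑ i : (k : Fin K) → Fin (p k), C i
      = (∏ k, (p k : ℝ))
        - ∑ i : (k : Fin K) → Fin (p k), S i ^ 2 * ∑ k, 1 / (σ k (i k)) ^ 2 :=
  sum_correction_array_general K p σ S C hC
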